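/- arXiv:2210.10236 — 6 statements merged into one kernel-verified Lean document; each statement's English description precedes it below -/
import Mathlib

section
/- Let X ⊆ B(λ) and Y ⊆ B(μ) be extremal subsets. If there exists an index i and an i-hinge x ⊗ y ∈ X ⊗ Y with f_i(y) ∉ Y (a broken i-hinge), then X ⊗ Y is not an extremal subset of B(λ) ⊗ B(μ). -/
/-! Common definitions: abstract normal crystals, tensor products, extremal subsets,
hinges, Demazure crystals, and related Coxeter-theoretic notions. -/

/-- Iterate a partially defined map `k` times. -/
def optIter {B : Type*} (g : B → Option B) : ℕ → B → Option B
  | 0, b => some b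
  | k + 1, b => (g b).bind (optIter g k)

/-- The raw data of a crystal: index set `I` (Dynkin nodes), weight lattice `P` with
simple roots `alpha i` and coroot pairings `pair i = ⟨α_i^∨, ·⟩`, and the structure
maps `wt, ε_i, φ_i, e_i, f_i` (with `none` playing the role of `0`). -/
structure CrystalStruct (I : Type*) (P : Type*) [AddCommGroup P] (B : Type*) where
  alpha : I → P
  pair : I → P →+ ℤ
  wt : B → P
  eps : I → B → ℤ
  phi : I → B → ℤ
  e : I → B → Option B
  f : I → B → Option B

namespace CrystalStruct

variable {I P B B₁ B₂ : Type*} [AddCommGroup P]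

/-- The crystal axioms (C1)–(C4) of a (finite, normal) crystal. Axiom (C4) is
expressed by saying `ε_i(b)` (resp. `φ_i(b)`) is the largest `k` with `e_i^k(b)`
(resp. `f_i^k(b)`) defined. -/
structure IsCrystal (C : CrystalStruct I P B) : Prop where
  C1 : ∀ i b, C.phi i b - C.eps i b = C.pair i (C.wt b)
  wt_e : ∀ i b b', C.e i b = some b' → C.wt b' = C.wt b + C.alpha i
  wt_f : ∀ i b b', C.f i b = some b' → C.wt b' = C.wt b - C.alpha i
  C3 : ∀ i b b', C.e i b = some b' ↔ C.f i b' = some b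
  eps_nonneg : ∀ i b, 0 ≤ C.eps i b
  phi_nonneg : ∀ i b, 0 ≤ C.phi i b
  eps_max : ∀ i b, (optIter (C.e i) (C.eps i b).toNat b).isSome ∧
      ∀ k : ℕ, (optIter (C.e i) k b).isSome → (k : ℤ) ≤ C.eps i b
  phi_max : ∀ i b, (optIter (C.f i) (C.phi i b).toNat b).isSome ∧
      ∀ k : ℕ, (optIter (C.f i) k b).isSome → (k : ℤ) ≤ C.phi i b

/-- The tensor product `B₁ ⊗ B₂` of two crystals, with the standard signature rule. -/
def tensor (C₁ : CrystalStruct I P B₁) (C₂ : CrystalStruct I P B₂) :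
    CrystalStruct I P (B₁ × B₂) where
  alpha := C₁.alpha
  pair := C₁.pair
  wt b := C₁.wt b.1 + C₂.wt b.2
  eps i b := max (C₁.eps i b.1) (C₂.eps i b.2 - C₁.pair i (C₁.wt b.1))
  phi i b := max (C₂.phi i b.2) (C₁.phi i b.1 + C₁.pair i (C₂.wt b.2))
  e i b := if C₂.eps i b.2 ≤ C₁.phi i b.1
      then (C₁.e i b.1).map (fun x => (x, b.2))
      else (C₂.e i b.2).map (fun y => (b.1, y))
  f i b := if C₂.eps i b.2 < C₁.phi i b.1
      then (C₁.f i b.1).map (fun x => (x, b.2))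
      else (C₂.f i b.2).map (fun y => (b.1, y))

/-- A subset `X` of a crystal is *extremal* (string property): `X` is nonempty, closed
under all raising operators `e_i`, and whenever `x ∈ X` is not the top of its `i`-string
(i.e. `e_i x` is defined), `X` also contains `f_i x` when defined.  This is the local
reformulation of: every `i`-string meets `X` in `∅`, the whole string, or its top element. -/
def Extremal (C : CrystalStruct I P B) (X : Set B) : Prop :=
  X.Nonempty ∧ ∀ i, ∀ x ∈ X,
    (∀ x', C.e i x = some x' → x' ∈ X) ∧
    ((C.e i x).isSome → ∀ x', C.f i x = some x' → x' ∈ X)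

/-- `x ⊗ y` is an *`i`-hinge*: `ε_i(x) > 0`, `φ_i(x) = 0`, `ε_i(y) = 0`, `φ_i(y) > 0`. -/
def IsHinge (C₁ : CrystalStruct I P B₁) (C₂ : CrystalStruct I P B₂)
    (i : I) (x : B₁) (y : B₂) : Prop :=
  0 < C₁.eps i x ∧ C₁.phi i x = 0 ∧ C₂.eps i y = 0 ∧ 0 < C₂.phi i y

/-- `F_i X = ⋃_{k ≥ 0} f_i^k X` : close a subset under the lowering operator `f_i`. -/
def fClosure (C : CrystalStruct I P B) (i : I) (X : Set B) : Set B :=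
  {b | ∃ x ∈ X, ∃ k, optIter (C.f i) k x = some b}

/-- `demWord C [i₁, …, i_k] X = F_{i₁} F_{i₂} ⋯ F_{i_k} X`. -/
def demWord (C : CrystalStruct I P B) : List I → Set B → Set B
  | [], X => X
  | i :: L, X => C.fClosure i (C.demWord L X)

/-- Apply raising operators along a list of indices. -/
def applyE (C : CrystalStruct I P B) : List I → B → Option B
  | [], b => some b
  | i :: L, b => (C.e i b).bind (C.applyE L)

/-- `applyFPow C [(i₁,m₁),…,(i_k,m_k)] b = f_{i₁}^{m₁} f_{i₂}^{m₂} ⋯ f_{i_k}^{m_k} (b)`. -/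
def applyFPow (C : CrystalStruct I P B) : List (I × ℕ) → B → Option B
  | [], b => some b
  | p :: L, b => (C.applyFPow L b).bind (optIter (C.f p.1) p.2)

/-- A highest weight element: all raising operators vanish. -/
def HighestWeight (C : CrystalStruct I P B) (b : B) : Prop := ∀ i, C.e i b = none

/-- `C` is a highest weight normal crystal with highest weight element `hw`:
it satisfies the crystal axioms, `hw` is highest weight, and `B = F {hw}`. -/
structure IsHWCrystal (C : CrystalStruct I P B) (hw : B) : Prop where
  crystal : C.IsCrystal
  hw_top : C.HighestWeight hw
  connected : ∀ b, ∃ L : List I, b ∈ C.demWord L {hw}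

/-- The connected component `F {b}` of `b` (closure under lowering operators). -/
def component (C : CrystalStruct I P B) (b : B) : Set B :=
  {x | ∃ L : List I, x ∈ C.demWord L {b}}

end CrystalStruct

section Coxeter

open CrystalStruct

variable {I : Type*} {W : Type*} [Group W] {M : CoxeterMatrix I}

/-- Bruhat order via the subword property: `u ⪯ w` iff some reduced word for `w` contains
a reduced word for `u` as a subword. -/
def Bruhat (cs : CoxeterSystem M W) (u w : W) : Prop :=
  ∃ L L' : List I, cs.IsReduced L ∧ cs.wordProd L = w ∧
    L'.Sublist L ∧ cs.IsReduced L' ∧ cs.wordProd L' = u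

variable {P B : Type*} [AddCommGroup P]

/-- The Demazure crystal `B_w = F_w {hw}`, as the union over reduced words for `w`
of the corresponding compositions of string closures. -/
def DemCrystal (cs : CoxeterSystem M W) (C : CrystalStruct I P B) (hw : B) (w : W) :
    Set B :=
  {b | ∃ L : List I, cs.IsReduced L ∧ cs.wordProd L = w ∧ b ∈ C.demWord L {hw}}

/-- Kashiwara's theorem: `F_w {hw}` is independent of the reduced word for `w`. -/
def DemIndep (cs : CoxeterSystem M W) (C : CrystalStruct I P B) (hw : B) : Prop :=
  ∀ L L' : List I, cs.IsReduced L → cs.IsReduced L' → cs.wordProd L = cs.wordProd L' →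
    C.demWord L {hw} = C.demWord L' {hw}

/-- A subset is a *direct sum of Demazure crystals* if it is the union, over a set of
highest weight elements, of Demazure crystals of the corresponding components. -/
def IsDemazureSum (cs : CoxeterSystem M W) (C : CrystalStruct I P B) (Z : Set B) : Prop :=
  ∃ (S : Set B) (wf : B → W), (∀ b ∈ S, C.HighestWeight b) ∧
    Z = ⋃ b ∈ S, DemCrystal cs C b (wf b)

/-- `v` is the minimal-length representative of the coset `w H`. -/
def IsMinCosetRep (cs : CoxeterSystem M W) (H : Subgroup W) (w v : W) : Prop :=
  w⁻¹ * v ∈ H ∧ ∀ x : W, w⁻¹ * x ∈ H → cs.length v ≤ cs.length x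

/-- `v` is the maximal-length representative of the coset `w H`. -/
def IsMaxCosetRep (cs : CoxeterSystem M W) (H : Subgroup W) (w v : W) : Prop :=
  w⁻¹ * v ∈ H ∧ ∀ x : W, w⁻¹ * x ∈ H → cs.length x ≤ cs.length v

/-- The parabolic subgroup `W_σ = ⟨ s_i : s_i σ ≺ σ ⟩` generated by the left descents of `σ`. -/
def descentSubgroup (cs : CoxeterSystem M W) (σ : W) : Subgroup W :=
  Subgroup.closure {g | ∃ i, g = cs.simple i ∧ cs.length (cs.simple i * σ) < cs.length σ}

/-- The Weyl group acts on the weight lattice by simple reflections: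
`s_i • p = p − ⟨α_i^∨, p⟩ α_i`. -/
def ReflectionAction (cs : CoxeterSystem M W) (C : CrystalStruct I P B)
    [MulAction W P] : Prop :=
  ∀ (i : I) (p : P), cs.simple i • p = p - C.pair i p • C.alpha i

end Coxeter

namespace CrystalStruct

variable {I P B : Type*} [AddCommGroup P]

/-- Weight of a pure tensor `b₁ ⊗ ⋯ ⊗ b_m`, encoded as a list. -/
def listWt (C : CrystalStruct I P B) : List B → P
  | [] => 0
  | b :: l => C.wt b + C.listWt l

/-- `ε_i` on iterated tensors. -/
def listEps (C : CrystalStruct I P B) (i : I) : List B → ℤ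
  | [] => 0
  | b :: l => max (C.eps i b) (C.listEps i l - C.pair i (C.wt b))

/-- `φ_i` on iterated tensors. -/
def listPhi (C : CrystalStruct I P B) (i : I) : List B → ℤ
  | [] => 0
  | b :: l => max (C.listPhi i l) (C.phi i b + C.pair i (C.listWt l))

/-- `e_i` on iterated tensors (standard signature rule, iterated associatively). -/
def listE (C : CrystalStruct I P B) (i : I) : List B → Option (List B)
  | [] => none
  | b :: l => if C.listEps i l ≤ C.phi i b then (C.e i b).map (· :: l)
      else (C.listE i l).map (b :: ·)

/-- `f_i` on iterated tensors. -/
def listF (C : CrystalStruct I P B) (i : I) : List B → Option (List B)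
  | [] => none
  | b :: l => if C.listEps i l < C.phi i b then (C.f i b).map (· :: l)
      else (C.listF i l).map (b :: ·)

/-- The iterated tensor power crystal: pure tensors of all finite lengths, the
length-`m` ones forming `B^{⊗ m}`. -/
def tensorPow (C : CrystalStruct I P B) : CrystalStruct I P (List B) where
  alpha := C.alpha
  pair := C.pair
  wt := C.listWt
  eps := C.listEps
  phi := C.listPhi
  e := C.listE
  f := C.listF

end CrystalStruct

open CrystalStruct in
/-- if `X ⊗ Y` contains a broken `i`-hinge, it is not extremal. -/
theorem stmt4 {I P B₁ B₂ : Type*} [AddCommGroup P]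
    (C₁ : CrystalStruct I P B₁) (C₂ : CrystalStruct I P B₂)
    (h₁ : C₁.IsCrystal) (h₂ : C₂.IsCrystal) (hpair : C₂.pair = C₁.pair)
    (X : Set B₁) (Y : Set B₂) (hX : C₁.Extremal X) (hY : C₂.Extremal Y)
    (i : I) (x : B₁) (y : B₂) (hx : x ∈ X) (hy : y ∈ Y)
    (hh : IsHinge C₁ C₂ i x y)
    (hbroken : ∀ y', C₂.f i y = some y' → y' ∉ Y) :
    ¬ (C₁.tensor C₂).Extremal (X ×ˢ Y) := by
  rintro ⟨-, hext⟩
  obtain ⟨hex, hphx, hey, hphy⟩ := hh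
  have he1 : ∃ x', C₁.e i x = some x' := by
    have hit := (h₁.eps_max i x).1
    obtain ⟨k, hk⟩ : ∃ k, (C₁.eps i x).toNat = k + 1 := ⟨(C₁.eps i x).toNat - 1, by omega⟩
    rw [hk] at hit
    cases h : C₁.e i x with
    | none => rw [optIter, h] at hit; simp at hit
    | some x' => exact ⟨x', rfl⟩
  have hf2 : ∃ y', C₂.f i y = some y' := by
    have hit := (h₂.phi_max i y).1
    obtain ⟨k, hk⟩ : ∃ k, (C₂.phi i y).toNat = k + 1 := ⟨(C₂.phi i y).toNat - 1, by omega⟩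
    rw [hk] at hit
    cases h : C₂.f i y with
    | none => rw [optIter, h] at hit; simp at hit
    | some y' => exact ⟨y', rfl⟩
  obtain ⟨x', hx'⟩ := he1
  obtain ⟨y', hy'⟩ := hf2
  have htop := hext i (x, y) ⟨hx, hy⟩
  have heT : (C₁.tensor C₂).e i (x, y) = some (x', y) := by
    simp [CrystalStruct.tensor, hey, hphx, hx']
  have hfT : (C₁.tensor C₂).f i (x, y) = some (x, y') := by
    simp [CrystalStruct.tensor, hey, hphx, hy']
  have hmem := htop.2 (by rw [heT]; rfl) (x, y') hfT
  exact hbroken y' hy' hmem.2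
end

section
/- Let X ⊆ B(λ) and Y ⊆ B(μ) be extremal subsets. If X ⊗ Y contains no broken i-hinge for any index i, then X ⊗ Y is an extremal subset of B(λ) ⊗ B(μ). -/
section Aux

variable {I P B : Type*} [AddCommGroup P]

lemma aux_eps_pos {C : CrystalStruct I P B} (h : C.IsCrystal) {i : I} {b b' : B}
    (he : C.e i b = some b') : 0 < C.eps i b := by
  have h1 : (optIter (C.e i) 1 b).isSome := by
    simp [optIter, he]
  have := (h.eps_max i b).2 1 h1
  omega

lemma aux_phi_pos {C : CrystalStruct I P B} (h : C.IsCrystal) {i : I} {b b' : B}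
    (hf : C.f i b = some b') : 0 < C.phi i b := by
  have h1 : (optIter (C.f i) 1 b).isSome := by
    simp [optIter, hf]
  have := (h.phi_max i b).2 1 h1
  omega

lemma aux_e_isSome {C : CrystalStruct I P B} (h : C.IsCrystal) {i : I} {b : B}
    (hp : 0 < C.eps i b) : (C.e i b).isSome := by
  have h1 := (h.eps_max i b).1
  obtain ⟨k, hk⟩ : ∃ k, (C.eps i b).toNat = k + 1 := ⟨(C.eps i b).toNat - 1, by omega⟩
  rw [hk] at h1
  simp only [optIter] at h1
  cases hce : C.e i b with
  | none => rw [hce] at h1; simp at h1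
  | some _ => rfl

lemma aux_e2_isSome {C : CrystalStruct I P B} (h : C.IsCrystal) {i : I} {b : B}
    (hp : 0 < C.eps i b) : (C.e i b).isSome := aux_e_isSome h hp

end Aux

open CrystalStruct in
/-- if `X ⊗ Y` contains no broken `i`-hinge for any `i`, it is extremal. -/
theorem stmt5 {I P B₁ B₂ : Type*} [AddCommGroup P]
    (C₁ : CrystalStruct I P B₁) (C₂ : CrystalStruct I P B₂)
    (h₁ : C₁.IsCrystal) (h₂ : C₂.IsCrystal) (hpair : C₂.pair = C₁.pair)
    (X : Set B₁) (Y : Set B₂) (hX : C₁.Extremal X) (hY : C₂.Extremal Y)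
    (hnobroken : ∀ (i : I) (x : B₁) (y : B₂), x ∈ X → y ∈ Y →
      IsHinge C₁ C₂ i x y → ∀ y', C₂.f i y = some y' → y' ∈ Y) :
    (C₁.tensor C₂).Extremal (X ×ˢ Y) := by
  constructor
  · obtain ⟨x, hx⟩ := hX.1
    obtain ⟨y, hy⟩ := hY.1
    exact ⟨(x, y), hx, hy⟩
  · rintro i ⟨x, y⟩ ⟨hx, hy⟩
    have HX := hX.2 i x hx
    have HY := hY.2 i y hy
    constructor
    · rintro ⟨x', y'⟩ he
      simp only [tensor] at he
      split_ifs at he with hc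
      · obtain ⟨a, ha, heq⟩ := Option.map_eq_some_iff.mp he
        obtain ⟨rfl, rfl⟩ := Prod.mk.injEq .. ▸ heq
        exact ⟨HX.1 a ha, hy⟩
      · obtain ⟨b, hb, heq⟩ := Option.map_eq_some_iff.mp he
        obtain ⟨rfl, rfl⟩ := Prod.mk.injEq .. ▸ heq
        exact ⟨hx, HY.1 b hb⟩
    · intro hsome
      rintro ⟨x', y'⟩ hf
      simp only [tensor] at hsome hf
      split_ifs at hf with hc
      · -- f acts on the first factor
        rw [if_pos hc.le] at hsome
        have hes : (C₁.e i x).isSome := by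
          rcases hce : C₁.e i x with _ | a
          · rw [hce] at hsome; simp at hsome
          · rfl
        obtain ⟨a, ha, heq⟩ := Option.map_eq_some_iff.mp hf
        obtain ⟨rfl, rfl⟩ := Prod.mk.injEq .. ▸ heq
        exact ⟨HX.2 hes a ha, hy⟩
      · -- f acts on the second factor
        push_neg at hc
        obtain ⟨b, hb, heq⟩ := Option.map_eq_some_iff.mp hf
        obtain ⟨rfl, rfl⟩ := Prod.mk.injEq .. ▸ heq
        refine ⟨hx, ?_⟩
        by_cases hc2 : C₂.eps i y ≤ C₁.phi i x
        · -- then eps₂ y = phi₁ x, and e acts on the first factor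
          rw [if_pos hc2] at hsome
          have hes : (C₁.e i x).isSome := by
            rcases hce : C₁.e i x with _ | a
            · rw [hce] at hsome; simp at hsome
            · rfl
          obtain ⟨x0, hx0⟩ := Option.isSome_iff_exists.mp hes
          have hεx : 0 < C₁.eps i x := aux_eps_pos h₁ hx0
          by_cases hz : C₂.eps i y = 0
          · have hφx : C₁.phi i x = 0 := by
              have := h₁.phi_nonneg i x; omega
            have hφy : 0 < C₂.phi i y := aux_phi_pos h₂ hb
            exact hnobroken i x y hx hy ⟨hεx, hφx, hz, hφy⟩ b hb
          · have hεy : 0 < C₂.eps i y :=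
              lt_of_le_of_ne (h₂.eps_nonneg i y) (Ne.symm hz)
            exact HY.2 (aux_e_isSome h₂ hεy) b hb
        · rw [if_neg hc2] at hsome
          have hey : (C₂.e i y).isSome := by
            rcases hce : C₂.e i y with _ | c
            · rw [hce] at hsome; simp at hsome
            · rfl
          exact HY.2 hey b hb
end

section
/- Let X ⊆ B(λ) and Y ⊆ B(μ) be extremal subsets. Then X ⊗ Y is extremal in B(λ) ⊗ B(μ) if and only if for every x ⊗ y ∈ X ⊗ Y with e_i(x ⊗ y) = e_i(x) ⊗ y ≠ 0 and f_i(x ⊗ y) = x ⊗ f_i(y) ≠ 0, one has f_i(y) ∈ Y. -/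
open CrystalStruct in
/-- Theorem 1 of the paper: `X ⊗ Y` is extremal iff whenever
`e_i(x ⊗ y) = e_i(x) ⊗ y ≠ 0` and `f_i(x ⊗ y) = x ⊗ f_i(y) ≠ 0` one has `f_i(y) ∈ Y`. -/
theorem stmt6 {I P B₁ B₂ : Type*} [AddCommGroup P]
    (C₁ : CrystalStruct I P B₁) (C₂ : CrystalStruct I P B₂)
    (h₁ : C₁.IsCrystal) (h₂ : C₂.IsCrystal) (hpair : C₂.pair = C₁.pair)
    (X : Set B₁) (Y : Set B₂) (hX : C₁.Extremal X) (hY : C₂.Extremal Y) :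
    (C₁.tensor C₂).Extremal (X ×ˢ Y) ↔
      ∀ (i : I) (x : B₁) (y : B₂), x ∈ X → y ∈ Y →
        ∀ x' y', C₁.e i x = some x' → (C₁.tensor C₂).e i (x, y) = some (x', y) →
          C₂.f i y = some y' → (C₁.tensor C₂).f i (x, y) = some (x, y') →
          y' ∈ Y := by
  constructor
  · rintro ⟨-, hext⟩ i x y hx hy x' y' hex hte hfy htf
    obtain ⟨-, h2⟩ := hext i (x, y) ⟨hx, hy⟩
    exact (h2 (by rw [hte]; rfl) (x, y') htf).2
  · intro hcond
    refine ⟨hX.1.prod hY.1, ?_⟩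
    rintro i ⟨x, y⟩ ⟨hx, hy⟩
    constructor
    · rintro ⟨a, b⟩ he
      simp only [tensor] at he
      split at he
      · obtain ⟨x', hx', h⟩ := Option.map_eq_some_iff.mp he
        obtain ⟨h1, h2⟩ := Prod.mk.injEq .. ▸ h
        subst h1; subst h2
        exact ⟨(hX.2 i x hx).1 x' hx', hy⟩
      · obtain ⟨y', hy', h⟩ := Option.map_eq_some_iff.mp he
        obtain ⟨h1, h2⟩ := Prod.mk.injEq .. ▸ h
        subst h1; subst h2
        exact ⟨hx, (hY.2 i y hy).1 y' hy'⟩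
    · intro hsome
      rintro ⟨a, b⟩ hf
      simp only [tensor] at hf hsome
      split at hf
      · -- f acts on first factor; eps₂ < phi₁
        rename_i hlt
        obtain ⟨x'', hx'', h⟩ := Option.map_eq_some_iff.mp hf
        obtain ⟨h1, h2⟩ := Prod.mk.injEq .. ▸ h
        subst h1; subst h2
        rw [if_pos (le_of_lt hlt)] at hsome
        have hesome : (C₁.e i x).isSome := by
          rcases Option.isSome_iff_exists.mp hsome with ⟨z, hz⟩
          rcases Option.map_eq_some_iff.mp hz with ⟨x', hx', -⟩
          exact Option.isSome_iff_exists.mpr ⟨x', hx'⟩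
        exact ⟨(hX.2 i x hx).2 hesome x'' hx'', hy⟩
      · -- f acts on second factor; phi₁ ≤ eps₂
        rename_i hnlt
        obtain ⟨y'', hy'', h⟩ := Option.map_eq_some_iff.mp hf
        obtain ⟨h1, h2⟩ := Prod.mk.injEq .. ▸ h
        subst h1; subst h2
        split at hsome
        · -- eps₂ ≤ phi₁, so e acts on first factor
          rename_i hle
          rcases Option.isSome_iff_exists.mp hsome with ⟨z, hz⟩
          rcases Option.map_eq_some_iff.mp hz with ⟨x', hx', -⟩
          refine ⟨hx, hcond i x y hx hy x' y'' hx' ?_ hy'' ?_⟩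
          · show (if C₂.eps i y ≤ C₁.phi i x then _ else _) = _
            rw [if_pos hle, hx']; rfl
          · show (if C₂.eps i y < C₁.phi i x then _ else _) = _
            rw [if_neg hnlt, hy'']; rfl
        · -- e acts on second factor
          rcases Option.isSome_iff_exists.mp hsome with ⟨z, hz⟩
          rcases Option.map_eq_some_iff.mp hz with ⟨y', hy', -⟩
          have : (C₂.e i y).isSome := Option.isSome_iff_exists.mpr ⟨y', hy'⟩
          exact ⟨hx, (hY.2 i y hy).2 this y'' hy''⟩
end

section
/- If X ⊗ Y is an extremal subset of B(λ) ⊗ B(μ), then X is closed under raising operators: e_i(X) ⊆ X ∪ {0} for all i. -/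
open CrystalStruct in
/-- if `X ⊗ Y` is extremal then `X` is closed under raising operators. -/
theorem stmt7 {I P B₁ B₂ : Type*} [AddCommGroup P]
    (C₁ : CrystalStruct I P B₁) (C₂ : CrystalStruct I P B₂)
    (h₁ : C₁.IsCrystal) (h₂ : C₂.IsCrystal) (hpair : C₂.pair = C₁.pair)
    (X : Set B₁) (Y : Set B₂) (hXne : X.Nonempty) (hYne : Y.Nonempty)
    (hext : (C₁.tensor C₂).Extremal (X ×ˢ Y)) :
    ∀ (i : I), ∀ x ∈ X, ∀ x', C₁.e i x = some x' → x' ∈ X := by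
  intro i x hx x' hx'
  obtain ⟨y, hy⟩ := hYne
  suffices H : ∀ n : ℕ, ∀ y ∈ Y, (C₂.eps i y).toNat = n → x' ∈ X from H _ y hy rfl
  intro n
  induction n using Nat.strong_induction_on with
  | _ n IH =>
  intro y hy hn
  by_cases hle : C₂.eps i y ≤ C₁.phi i x
  · have hmem : (x, y) ∈ X ×ˢ Y := ⟨hx, hy⟩
    have h := (hext.2 i (x, y) hmem).1 (x', y) ?_
    · exact h.1
    · simp [CrystalStruct.tensor, hle, hx']
  · push_neg at hle
    have hpos : 0 < C₂.eps i y := lt_of_le_of_lt (h₁.phi_nonneg i x) hle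
    have h1 := (h₂.eps_max i y).1
    obtain ⟨y1, hy1⟩ : ∃ y1, C₂.e i y = some y1 := by
      have ht : (C₂.eps i y).toNat = (C₂.eps i y).toNat - 1 + 1 := by omega
      rw [ht] at h1
      cases hE : C₂.e i y with
      | none => rw [optIter] at h1; simp [hE] at h1
      | some y1 => exact ⟨y1, rfl⟩
    have hmem : (x, y) ∈ X ×ˢ Y := ⟨hx, hy⟩
    have h := (hext.2 i (x, y) hmem).1 (x, y1) ?_
    · -- eps decreases
      have hk := (h₂.eps_max i y1).1
      have hchain : (optIter (C₂.e i) ((C₂.eps i y1).toNat + 1) y).isSome := by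
        rw [optIter]; simpa [hy1] using hk
      have hle2 := (h₂.eps_max i y).2 _ hchain
      have hnn := h₂.eps_nonneg i y1
      exact IH _ (by omega) y1 h.2 rfl
    · simp [CrystalStruct.tensor, not_le.mpr hle, hy1]
end

section
/- If X ⊗ Y is an extremal subset of B(λ) ⊗ B(μ) and Y is closed under raising operators (e_i(Y) ⊆ Y ∪ {0} for all i), then X is an extremal subset of B(λ). -/
/-!
Fix `i` and `x ∈ X`. Raising some `y ∈ Y` to the top `y₀` of its `i`-string keeps it in `Y`
and gives `ε_i(y₀) = 0 ≤ φ_i(x)`, so by the signature rule `e_i` and `f_i` act on `x ⊗ y₀`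
through the first factor (for `f_i` because `f_i x ≠ 0` forces `φ_i(x) > 0`). The string
property of `X ×ˢ Y` at `x ⊗ y₀` is then exactly that of `X` at `x`.
-/

theorem optIter_add {B : Type*} (g : B → Option B) (m n : ℕ) (b : B) :
    optIter g (m + n) b = (optIter g m b).bind (optIter g n) := by
  induction m generalizing b with
  | zero => simp [optIter]
  | succ k ih =>
    rw [Nat.add_right_comm]
    change (g b).bind (optIter g (k + n)) = ((g b).bind (optIter g k)).bind (optIter g n)
    rw [Option.bind_assoc]
    exact Option.bind_congr fun a _ => ih a

theorem optIter_mem {B : Type*} {g : B → Option B} {S : Set B}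
    (hS : ∀ b ∈ S, ∀ b', g b = some b' → b' ∈ S) :
    ∀ (k : ℕ) {b b'}, b ∈ S → optIter g k b = some b' → b' ∈ S
  | 0, _, _, hb, h => Option.some_inj.mp h ▸ hb
  | k + 1, _, _, hb, h => by
    obtain ⟨c, hc, h⟩ := Option.bind_eq_some_iff.mp h
    exact optIter_mem hS k (hS _ hb c hc) h

namespace CrystalStruct

variable {I P B B₁ B₂ : Type*} [AddCommGroup P]

theorem IsCrystal.exists_optIter_e_eps_eq_zero {C : CrystalStruct I P B} (hC : C.IsCrystal)
    (i : I) (b : B) : ∃ k b₀, optIter (C.e i) k b = some b₀ ∧ C.eps i b₀ = 0 := by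
  obtain ⟨hsome, hmax⟩ := hC.eps_max i b
  obtain ⟨b₀, hb₀⟩ := Option.isSome_iff_exists.mp hsome
  refine ⟨_, b₀, hb₀, ?_⟩
  have hlonger := hmax _ <| by
    rw [optIter_add, hb₀]
    exact (hC.eps_max i b₀).1
  have := hC.eps_nonneg i b
  have := hC.eps_nonneg i b₀
  omega

theorem IsCrystal.phi_pos_of_f_eq_some {C : CrystalStruct I P B} (hC : C.IsCrystal)
    {i : I} {b b' : B} (h : C.f i b = some b') : 0 < C.phi i b := by
  have := (hC.phi_max i b).2 1 (by simp [optIter, h])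
  omega

theorem tensor_e_of_le (C₁ : CrystalStruct I P B₁) (C₂ : CrystalStruct I P B₂) {i : I}
    {x : B₁} {y : B₂} (h : C₂.eps i y ≤ C₁.phi i x) :
    (C₁.tensor C₂).e i (x, y) = (C₁.e i x).map (·, y) :=
  if_pos h

theorem tensor_f_of_lt (C₁ : CrystalStruct I P B₁) (C₂ : CrystalStruct I P B₂) {i : I}
    {x : B₁} {y : B₂} (h : C₂.eps i y < C₁.phi i x) :
    (C₁.tensor C₂).f i (x, y) = (C₁.f i x).map (·, y) :=
  if_pos h

end CrystalStruct

open CrystalStruct in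
theorem stmt8_general {I P B₁ B₂ : Type*} [AddCommGroup P]
    (C₁ : CrystalStruct I P B₁) (C₂ : CrystalStruct I P B₂)
    (h₁ : C₁.IsCrystal) (h₂ : C₂.IsCrystal)
    (X : Set B₁) (Y : Set B₂) (hXne : X.Nonempty) (hYne : Y.Nonempty)
    (hext : (C₁.tensor C₂).Extremal (X ×ˢ Y))
    (hYraise : ∀ (i : I), ∀ y ∈ Y, ∀ y', C₂.e i y = some y' → y' ∈ Y) :
    C₁.Extremal X := by
  refine ⟨hXne, fun i x hx => ?_⟩
  obtain ⟨y, hy⟩ := hYne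
  obtain ⟨k, y₀, hy₀, heps⟩ := h₂.exists_optIter_e_eps_eq_zero i y
  have hy₀Y : y₀ ∈ Y := optIter_mem (hYraise i) k hy hy₀
  have he := tensor_e_of_le C₁ C₂ (heps ▸ h₁.phi_nonneg i x : C₂.eps i y₀ ≤ C₁.phi i x)
  obtain ⟨hE, hF⟩ := hext.2 i (x, y₀) ⟨hx, hy₀Y⟩
  refine ⟨fun x' hx' => (hE (x', y₀) (by rw [he, hx']; rfl)).1, fun hxe x' hx' => ?_⟩
  have hf := tensor_f_of_lt C₁ C₂
    (heps ▸ h₁.phi_pos_of_f_eq_some hx' : C₂.eps i y₀ < C₁.phi i x)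
  exact (hF (by rwa [he, Option.isSome_map]) (x', y₀) (by rw [hf, hx']; rfl)).1

open CrystalStruct in
/-- if `X ⊗ Y` is extremal and `Y` is closed under raising operators,
then `X` is extremal. -/
theorem stmt8 {I P B₁ B₂ : Type*} [AddCommGroup P]
    (C₁ : CrystalStruct I P B₁) (C₂ : CrystalStruct I P B₂)
    (h₁ : C₁.IsCrystal) (h₂ : C₂.IsCrystal) (hpair : C₂.pair = C₁.pair)
    (X : Set B₁) (Y : Set B₂) (hXne : X.Nonempty) (hYne : Y.Nonempty)
    (hext : (C₁.tensor C₂).Extremal (X ×ˢ Y))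
    (hYraise : ∀ (i : I), ∀ y ∈ Y, ∀ y', C₂.e i y = some y' → y' ∈ Y) :
    C₁.Extremal X :=
  stmt8_general C₁ C₂ h₁ h₂ X Y hXne hYne hext hYraise
end

section
/- Suppose λ, μ ∈ P⁺ with ⟨α_i^∨, μ⟩ = 0 whenever ⟨α_i^∨, λ⟩ = 0. If b_λ ⊗ y lies in the connected component F({b_λ ⊗ b_μ}) of B(λ) ⊗ B(μ) generated by b_λ ⊗ b_μ under lowering operators, then y = b_μ. -/
namespace CrystalStruct

variable {I P B B₁ B₂ : Type*} [AddCommGroup P]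

theorem optIter_induction {g : B → Option B} {Q : B → Prop}
    (hg : ∀ b b', Q b → g b = some b' → Q b') :
    ∀ (k : ℕ) {b b' : B}, Q b → optIter g k b = some b' → Q b'
  | 0, _, _, hb, h => Option.some_inj.mp h ▸ hb
  | k + 1, b, _, hb, h => by
    obtain ⟨c, hc, hc'⟩ := Option.bind_eq_some_iff.mp h
    exact optIter_induction hg k (hg b c hb hc) hc'

section Invariant

variable {C : CrystalStruct I P B} {Q : B → Prop}
  (hf : ∀ i b b', Q b → C.f i b = some b' → Q b')
include hf

theorem demWord_induction {X : Set B} (hX : ∀ b ∈ X, Q b) :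
    ∀ (L : List I), ∀ b ∈ C.demWord L X, Q b
  | [], b, hb => hX b hb
  | _ :: L, _, ⟨x, hx, k, hk⟩ => optIter_induction (hf _) k (demWord_induction hX L x hx) hk

theorem component_induction {b x : B} (hb : Q b) (hx : x ∈ C.component b) : Q x := by
  obtain ⟨L, hL⟩ := hx
  exact demWord_induction hf (by simpa using hb) L x hL

end Invariant

section Crystal

variable {C : CrystalStruct I P B} (hC : C.IsCrystal)
include hC

theorem IsCrystal.eps_eq_zero_of_e_eq_none {i : I} {b : B} (h : C.e i b = none) :
    C.eps i b = 0 := by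
  have hsome := (hC.eps_max i b).1
  have hz : (C.eps i b).toNat = 0 := by
    by_contra hne
    obtain ⟨n, hn⟩ := Nat.exists_eq_succ_of_ne_zero hne
    simp [hn, optIter, h] at hsome
  have := hC.eps_nonneg i b
  omega

theorem IsCrystal.one_le_phi_of_f_eq_some {i : I} {b b' : B} (h : C.f i b = some b') :
    1 ≤ C.phi i b :=
  (hC.phi_max i b).2 1 (by simp [optIter, h])

theorem IsCrystal.phi_eq_pair_wt_of_highestWeight {b : B} (hb : C.HighestWeight b) (i : I) :
    C.phi i b = C.pair i (C.wt b) := by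
  have := hC.C1 i b
  rw [hC.eps_eq_zero_of_e_eq_none (hb i)] at this
  omega

theorem IsCrystal.f_ne_some_of_highestWeight {b : B} (hb : C.HighestWeight b) (i : I) (x : B) :
    C.f i x ≠ some b := fun h => by
  simpa [hb i] using (hC.C3 i b x).mpr h

end Crystal

theorem tensor_f_eq_some_iff (C₁ : CrystalStruct I P B₁) (C₂ : CrystalStruct I P B₂)
    {i : I} {x x' : B₁} {z z' : B₂} :
    (C₁.tensor C₂).f i (x, z) = some (x', z') ↔
      (C₂.eps i z < C₁.phi i x ∧ C₁.f i x = some x' ∧ z' = z) ∨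
      (C₁.phi i x ≤ C₂.eps i z ∧ x' = x ∧ C₂.f i z = some z') := by
  simp only [tensor]
  split_ifs with h
  · simp [h, eq_comm]
  · simp [h, not_lt.mp h, eq_comm, and_comm]

theorem tensor_f_ne_some_highestWeight_fst {C₁ : CrystalStruct I P B₁}
    {C₂ : CrystalStruct I P B₂} (hC₁ : C₁.IsCrystal) (hC₂ : C₂.IsCrystal)
    {hw₁ : B₁} {hw₂ : B₂} (ht₁ : C₁.HighestWeight hw₁) (ht₂ : C₂.HighestWeight hw₂) {i : I}
    (hsupp : C₁.pair i (C₁.wt hw₁) = 0 → C₂.pair i (C₂.wt hw₂) = 0)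
    {x : B₁} {z z' : B₂} (hxz : x = hw₁ → z = hw₂) :
    (C₁.tensor C₂).f i (x, z) ≠ some (hw₁, z') := by
  rw [Ne, tensor_f_eq_some_iff]
  rintro (⟨-, hx, -⟩ | ⟨hle, rfl, hz⟩)
  · exact hC₁.f_ne_some_of_highestWeight ht₁ i x hx
  · obtain rfl := hxz rfl
    rw [hC₂.eps_eq_zero_of_e_eq_none (ht₂ i)] at hle
    have hphi₁ : C₁.phi i hw₁ = 0 := le_antisymm hle (hC₁.phi_nonneg i hw₁)
    have hphi₂ : C₂.phi i z = 0 := by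
      rw [hC₂.phi_eq_pair_wt_of_highestWeight ht₂]
      exact hsupp (hC₁.phi_eq_pair_wt_of_highestWeight ht₁ i ▸ hphi₁)
    have := hC₂.one_le_phi_of_f_eq_some hz
    omega

end CrystalStruct

open CrystalStruct in
theorem stmt15_general {I P B₁ B₂ : Type*} [AddCommGroup P]
    (C₁ : CrystalStruct I P B₁) (C₂ : CrystalStruct I P B₂)
    (hw₁ : B₁) (hw₂ : B₂)
    (h₁ : C₁.IsHWCrystal hw₁) (h₂ : C₂.IsHWCrystal hw₂)
    (hsupp : ∀ i : I, C₁.pair i (C₁.wt hw₁) = 0 → C₂.pair i (C₂.wt hw₂) = 0)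
    (y : B₂) (hy : (hw₁, y) ∈ (C₁.tensor C₂).component (hw₁, hw₂)) :
    y = hw₂ := by
  refine component_induction (Q := fun b => b.1 = hw₁ → b.2 = hw₂) ?_ (fun _ => rfl) hy rfl
  rintro i ⟨x, z⟩ ⟨x', z'⟩ hxz hf rfl
  exact absurd hf (tensor_f_ne_some_highestWeight_fst h₁.crystal h₂.crystal
    h₁.hw_top h₂.hw_top (hsupp i) hxz)

open CrystalStruct in
/-- if the support of `μ` is contained in that of `λ` and
`b_λ ⊗ y ∈ F({b_λ ⊗ b_μ})`, then `y = b_μ`. -/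
theorem stmt15 {I P B₁ B₂ : Type*} [AddCommGroup P]
    (C₁ : CrystalStruct I P B₁) (C₂ : CrystalStruct I P B₂)
    (hw₁ : B₁) (hw₂ : B₂)
    (h₁ : C₁.IsHWCrystal hw₁) (h₂ : C₂.IsHWCrystal hw₂)
    (hpair : C₂.pair = C₁.pair)
    (hsupp : ∀ i : I, C₁.pair i (C₁.wt hw₁) = 0 → C₂.pair i (C₂.wt hw₂) = 0)
    (y : B₂) (hy : (hw₁, y) ∈ (C₁.tensor C₂).component (hw₁, hw₂)) :
    y = hw₂ :=
  stmt15_general C₁ C₂ hw₁ hw₂ h₁ h₂ hsupp y hy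
end
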